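/- arXiv:1910.13874 — 6 statements merged into one kernel-verified Lean document; each statement's English description precedes it below -/
import Mathlib

section
/- GED-Walk is submodular as a set function: if α·σ_max < 1, S ⊆ T ⊆ V, and x ∈ V \ T, then GED(S ∪ {x}) − GED(S) ≥ GED(T ∪ {x}) − GED(T). -/
open scoped BigOperators

/-- `p : Fin (i+1) → V` is a walk of length `i` in `G`:
a sequence of `i+1` vertices in which consecutive vertices are adjacent. -/
def SimpleGraph.IsWalkFun {V : Type*} (G : SimpleGraph V) (i : ℕ) (p : Fin (i + 1) → V) : Prop :=
  ∀ j : Fin i, G.Adj (p j.castSucc) (p j.succ)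

instance {V : Type*} (G : SimpleGraph V) [DecidableRel G.Adj] (i : ℕ) :
    DecidablePred (G.IsWalkFun i) := fun p =>
  decidable_of_iff (∀ j : Fin i, G.Adj (p j.castSucc) (p j.succ)) Iff.rfl

/-- `φ_i(S)`: the number of walks of length `i` in `G` containing at least one vertex of `S`. -/
def SimpleGraph.phiCount {V : Type*} [Fintype V] [DecidableEq V] (G : SimpleGraph V)
    [DecidableRel G.Adj] (i : ℕ) (S : Finset V) : ℕ :=
  (Finset.univ.filter fun p : Fin (i + 1) → V => G.IsWalkFun i p ∧ ∃ j, p j ∈ S).card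

/-- The total number of walks of length `i` in `G`. -/
def SimpleGraph.walkCount {V : Type*} [Fintype V] [DecidableEq V] (G : SimpleGraph V)
    [DecidableRel G.Adj] (i : ℕ) : ℕ :=
  (Finset.univ.filter fun p : Fin (i + 1) → V => G.IsWalkFun i p).card

/-- `φ^miss_i(v, S)`: the number of walks of length `i` ending at `v` containing no vertex of `S`. -/
def SimpleGraph.missCount {V : Type*} [Fintype V] [DecidableEq V] (G : SimpleGraph V)
    [DecidableRel G.Adj] (i : ℕ) (v : V) (S : Finset V) : ℕ :=
  (Finset.univ.filter fun p : Fin (i + 1) → V =>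
    G.IsWalkFun i p ∧ p (Fin.last i) = v ∧ ∀ j, p j ∉ S).card

/-- `φ^hit_i(v, S)`: the number of walks of length `i` ending at `v` containing at least one
vertex of `S`. -/
def SimpleGraph.hitCount {V : Type*} [Fintype V] [DecidableEq V] (G : SimpleGraph V)
    [DecidableRel G.Adj] (i : ℕ) (v : V) (S : Finset V) : ℕ :=
  (Finset.univ.filter fun p : Fin (i + 1) → V =>
    G.IsWalkFun i p ∧ p (Fin.last i) = v ∧ ∃ j, p j ∈ S).card

/-- `s_j(x, S)`: the number of walks of length `j` starting at `x` containing no vertex of `S`. -/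
def SimpleGraph.startMissCount {V : Type*} [Fintype V] [DecidableEq V] (G : SimpleGraph V)
    [DecidableRel G.Adj] (j : ℕ) (x : V) (S : Finset V) : ℕ :=
  (Finset.univ.filter fun p : Fin (j + 1) → V =>
    G.IsWalkFun j p ∧ p 0 = x ∧ ∀ l, p l ∉ S).card

/-- `σ_max`: the largest singular value of the adjacency matrix of `G`,
i.e. its ℓ²→ℓ² operator norm. -/
noncomputable def SimpleGraph.sigmaMax {V : Type*} [Fintype V] [DecidableEq V]
    (G : SimpleGraph V) [DecidableRel G.Adj] : ℝ :=
  ‖Matrix.toEuclideanCLM (𝕜 := ℝ) (G.adjMatrix ℝ)‖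

/-- `ω_i(x) = Σ_z (A^i)_{xz}`: the number of walks of length `i` starting at `x`. -/
noncomputable def SimpleGraph.omegaCount {V : Type*} [Fintype V] [DecidableEq V]
    (G : SimpleGraph V) [DecidableRel G.Adj] (i : ℕ) (x : V) : ℝ :=
  ∑ z : V, (G.adjMatrix ℝ ^ i) x z

/-- `GED(S) = Σ_{i=1}^∞ α^i φ_i(S)`. -/
noncomputable def SimpleGraph.GED {V : Type*} [Fintype V] [DecidableEq V] (G : SimpleGraph V)
    [DecidableRel G.Adj] (α : ℝ) (S : Finset V) : ℝ :=
  ∑' i : ℕ, α ^ (i + 1) * (G.phiCount (i + 1) S : ℝ)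

/-- `GED_{≤ℓ}(S) = Σ_{i=1}^ℓ α^i φ_i(S)`. -/
noncomputable def SimpleGraph.GEDle {V : Type*} [Fintype V] [DecidableEq V] (G : SimpleGraph V)
    [DecidableRel G.Adj] (α : ℝ) (ℓ : ℕ) (S : Finset V) : ℝ :=
  ∑ i ∈ Finset.range ℓ, α ^ (i + 1) * (G.phiCount (i + 1) S : ℝ)

/-- `GED_{>ℓ}(S) = Σ_{i=ℓ+1}^∞ α^i φ_i(S)`. -/
noncomputable def SimpleGraph.GEDtail {V : Type*} [Fintype V] [DecidableEq V] (G : SimpleGraph V)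
    [DecidableRel G.Adj] (α : ℝ) (ℓ : ℕ) (S : Finset V) : ℝ :=
  ∑' i : ℕ, α ^ (ℓ + 1 + i) * (G.phiCount (ℓ + 1 + i) S : ℝ)

/-- `KC(x) = Σ_{i=1}^∞ α^i ω_i(x)`: Katz centrality of `x`. -/
noncomputable def SimpleGraph.katz {V : Type*} [Fintype V] [DecidableEq V] (G : SimpleGraph V)
    [DecidableRel G.Adj] (α : ℝ) (x : V) : ℝ :=
  ∑' i : ℕ, α ^ (i + 1) * G.omegaCount (i + 1) x

/-!
Adding `x` to `U` adds exactly the walks that pass through `x` but avoid `U`, so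
`GED(U ∪ {x}) - GED(U) = Σ_i α^i · #{walks of length i through x avoiding U}`, and every term of
this series can only shrink as `U` grows. The series converge because the number of walks of
length `i` is `1ᵀ Aⁱ 1 ≤ |V| σ_max^i`.
-/

theorem Matrix.sum_sum_le_card_mul_norm_toEuclideanCLM {n : Type*} [Fintype n] [DecidableEq n]
    (M : Matrix n n ℝ) : ∑ u, ∑ v, M u v ≤ Fintype.card n * ‖toEuclideanCLM (𝕜 := ℝ) M‖ := by
  set e : EuclideanSpace ℝ n := WithLp.toLp 2 fun _ => 1
  have he : ‖e‖ ^ 2 = Fintype.card n := by simp [e, EuclideanSpace.norm_sq_eq]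
  calc ∑ u, ∑ v, M u v = inner ℝ e (toEuclideanCLM (𝕜 := ℝ) M e) := by
        rw [Matrix.inner_toEuclideanCLM]
        simp [e, dotProduct, Matrix.mulVec]
    _ ≤ ‖e‖ * ‖toEuclideanCLM (𝕜 := ℝ) M e‖ := real_inner_le_norm _ _
    _ ≤ ‖e‖ * (‖toEuclideanCLM (𝕜 := ℝ) M‖ * ‖e‖) := by
        gcongr
        exact ContinuousLinearMap.le_opNorm _ _
    _ = Fintype.card n * ‖toEuclideanCLM (𝕜 := ℝ) M‖ := by rw [← he]; ring

namespace SimpleGraph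

open Finset

variable {V : Type*} (G : SimpleGraph V)

theorem isWalkFun_snoc {i : ℕ} (q : Fin (i + 1) → V) (v : V) :
    G.IsWalkFun (i + 1) (Fin.snoc q v) ↔ G.IsWalkFun i q ∧ G.Adj (q (Fin.last i)) v := by
  simp only [IsWalkFun, Fin.forall_fin_succ', Fin.succ_castSucc, Fin.snoc_castSucc,
    Fin.succ_last, Fin.snoc_last]

variable [Fintype V] [DecidableEq V] [DecidableRel G.Adj]

def endCount (i : ℕ) (v : V) : ℕ :=
  #{p : Fin (i + 1) → V | G.IsWalkFun i p ∧ p (Fin.last i) = v}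

theorem endCount_zero (v : V) : G.endCount 0 v = 1 := by
  rw [endCount, card_eq_one]
  refine ⟨fun _ => v, ext fun p => ?_⟩
  simp [IsWalkFun, funext_iff, Fin.forall_fin_one]

theorem endCount_succ (i : ℕ) (v : V) :
    G.endCount (i + 1) v = ∑ u, if G.Adj u v then G.endCount i u else 0 := by
  rw [endCount, card_eq_sum_card_fiberwise (t := univ)
    (f := fun p : Fin (i + 2) → V => p (Fin.last i).castSucc) fun _ _ => mem_univ _]
  refine sum_congr rfl fun u _ => ?_
  have hfiber : #{p : Fin (i + 2) → V | (G.IsWalkFun (i + 1) p ∧ p (Fin.last (i + 1)) = v) ∧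
      p (Fin.last i).castSucc = u} =
      #{q : Fin (i + 1) → V | (G.IsWalkFun i q ∧ q (Fin.last i) = u) ∧ G.Adj u v} := by
    refine card_nbij' Fin.init (Fin.snoc · v) ?_ ?_ ?_ ?_
    · intro p hp
      simp only [coe_filter, Set.mem_ofPred_eq, mem_univ, true_and] at hp ⊢
      obtain ⟨⟨hw, rfl⟩, rfl⟩ := hp
      rw [← Fin.snoc_init_self p, isWalkFun_snoc] at hw
      exact ⟨⟨hw.1, rfl⟩, hw.2⟩
    · intro q hq
      simp only [coe_filter, Set.mem_ofPred_eq, mem_univ, true_and] at hq ⊢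
      obtain ⟨⟨hw, rfl⟩, hadj⟩ := hq
      simp [isWalkFun_snoc, hw, hadj]
    · intro p hp
      simp only [coe_filter, Set.mem_ofPred_eq, mem_univ, true_and] at hp
      simp [← hp.1.2]
    · intro q _
      exact Fin.init_snoc _ _
  rw [filter_filter, hfiber]
  split_ifs with h <;> simp [h, endCount]

theorem endCount_eq_sum_adjMatrix_pow (i : ℕ) (v : V) :
    (G.endCount i v : ℝ) = ∑ u, (G.adjMatrix ℝ ^ i) u v := by
  induction i generalizing v with
  | zero => simp [endCount_zero, Matrix.one_apply]
  | succ i ih =>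
    simp_rw [pow_succ, Matrix.mul_apply]
    rw [sum_comm, endCount_succ, Nat.cast_sum]
    refine sum_congr rfl fun w _ => ?_
    rw [← sum_mul, ← ih, adjMatrix_apply]
    split_ifs <;> simp

theorem walkCount_eq_sum_endCount (i : ℕ) : G.walkCount i = ∑ v, G.endCount i v := by
  rw [walkCount, card_eq_sum_card_fiberwise (t := univ)
    (f := fun p : Fin (i + 1) → V => p (Fin.last i)) fun _ _ => mem_univ _]
  simp only [endCount, filter_filter]

theorem walkCount_le_card_mul_sigmaMax_pow (i : ℕ) :
    (G.walkCount (i + 1) : ℝ) ≤ Fintype.card V * G.sigmaMax ^ (i + 1) := by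
  have hsum : (G.walkCount (i + 1) : ℝ) = ∑ u, ∑ v, (G.adjMatrix ℝ ^ (i + 1)) u v := by
    simp_rw [walkCount_eq_sum_endCount, Nat.cast_sum, endCount_eq_sum_adjMatrix_pow]
    exact sum_comm
  rw [hsum]
  refine (Matrix.sum_sum_le_card_mul_norm_toEuclideanCLM _).trans ?_
  gcongr
  rw [map_pow]
  exact norm_pow_le' _ i.succ_pos

def hitMissCount (i : ℕ) (x : V) (U : Finset V) : ℕ :=
  #{p : Fin (i + 1) → V | G.IsWalkFun i p ∧ (∃ j, p j = x) ∧ ∀ j, p j ∉ U}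

theorem phiCount_insert (i : ℕ) (x : V) (U : Finset V) :
    G.phiCount i (insert x U) = G.phiCount i U + G.hitMissCount i x U := by
  rw [phiCount, ← card_filter_add_card_filter_not fun p => ∃ j, p j ∈ U,
    filter_filter, filter_filter, phiCount, hitMissCount]
  congr 2 <;> ext p <;> simp only [mem_filter, mem_univ, true_and, mem_insert, not_exists]
  · exact ⟨fun ⟨⟨hw, _⟩, hU⟩ => ⟨hw, hU⟩, fun ⟨hw, j, hj⟩ => ⟨⟨hw, j, .inr hj⟩, j, hj⟩⟩
  · refine ⟨fun ⟨⟨hw, j, hj⟩, hU⟩ => ⟨hw, ⟨j, hj.resolve_right (hU j)⟩, hU⟩,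
      fun ⟨hw, ⟨j, hj⟩, hU⟩ => ⟨⟨hw, j, .inl hj⟩, hU⟩⟩

theorem hitMissCount_anti (i : ℕ) (x : V) {S T : Finset V} (hST : S ⊆ T) :
    G.hitMissCount i x T ≤ G.hitMissCount i x S :=
  card_le_card <| monotone_filter_right _ fun _ _ ⟨hw, hx, hT⟩ =>
    ⟨hw, hx, fun j hj => hT j (hST hj)⟩

theorem phiCount_le_walkCount (i : ℕ) (U : Finset V) : G.phiCount i U ≤ G.walkCount i :=
  card_le_card <| monotone_filter_right _ fun _ _ => And.left

theorem hitMissCount_le_walkCount (i : ℕ) (x : V) (U : Finset V) :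
    G.hitMissCount i x U ≤ G.walkCount i :=
  card_le_card <| monotone_filter_right _ fun _ _ => And.left

theorem summable_of_le_walkCount {α : ℝ} (hα : 0 ≤ α) (h : α * G.sigmaMax < 1) {c : ℕ → ℕ}
    (hc : ∀ i, c i ≤ G.walkCount (i + 1)) : Summable fun i => α ^ (i + 1) * (c i : ℝ) := by
  have hασ : 0 ≤ α * G.sigmaMax := mul_nonneg hα (norm_nonneg _)
  refine .of_nonneg_of_le (fun i => by positivity) (fun i => ?_)
    ((summable_geometric_of_lt_one hασ h).mul_left (Fintype.card V * (α * G.sigmaMax)))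
  calc α ^ (i + 1) * (c i : ℝ) ≤ α ^ (i + 1) * (Fintype.card V * G.sigmaMax ^ (i + 1)) := by
        gcongr
        exact (Nat.cast_le.mpr (hc i)).trans (G.walkCount_le_card_mul_sigmaMax_pow i)
    _ = Fintype.card V * (α * G.sigmaMax) * (α * G.sigmaMax) ^ i := by ring

theorem summable_hitMissCount {α : ℝ} (hα : 0 ≤ α) (h : α * G.sigmaMax < 1) (x : V)
    (U : Finset V) : Summable fun i => α ^ (i + 1) * (G.hitMissCount (i + 1) x U : ℝ) :=
  G.summable_of_le_walkCount hα h fun i => G.hitMissCount_le_walkCount (i + 1) x U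

theorem GED_insert_sub {α : ℝ} (hα : 0 ≤ α) (h : α * G.sigmaMax < 1) (x : V) (U : Finset V) :
    G.GED α (insert x U) - G.GED α U = ∑' i, α ^ (i + 1) * (G.hitMissCount (i + 1) x U : ℝ) := by
  have hU := G.summable_of_le_walkCount hα h fun i => G.phiCount_le_walkCount (i + 1) U
  rw [sub_eq_iff_eq_add', GED, GED, ← hU.tsum_add (G.summable_hitMissCount hα h x U)]
  simp_rw [phiCount_insert, Nat.cast_add, mul_add]

end SimpleGraph

theorem ged_submodular_general {V : Type*} [Fintype V] [DecidableEq V]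
    (G : SimpleGraph V) [DecidableRel G.Adj] (α : ℝ) (hα : 0 < α)
    (h : α * G.sigmaMax < 1) (S T : Finset V) (hST : S ⊆ T) (x : V) :
    G.GED α (insert x S) - G.GED α S ≥ G.GED α (insert x T) - G.GED α T := by
  rw [G.GED_insert_sub hα.le h, G.GED_insert_sub hα.le h]
  refine Summable.tsum_le_tsum (fun i => ?_) (G.summable_hitMissCount hα.le h x T)
    (G.summable_hitMissCount hα.le h x S)
  gcongr
  exact G.hitMissCount_anti (i + 1) x hST

/-- GED-Walk is submodular as a set function. -/
theorem ged_submodular {V : Type*} [Fintype V] [DecidableEq V]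
    (G : SimpleGraph V) [DecidableRel G.Adj] (α : ℝ) (hα : 0 < α)
    (h : α * G.sigmaMax < 1) (S T : Finset V) (hST : S ⊆ T) (x : V) (hx : x ∉ T) :
    G.GED α (insert x S) - G.GED α S ≥ G.GED α (insert x T) - G.GED α T :=
  ged_submodular_general G α hα h S T hST x
end

section
/- Let n = |V| ≥ 1. If 0 < α < 1/(n³ + n), then for every S ⊆ V the tail of the GED-Walk series beyond length 1 satisfies Σ_{i=2}^∞ α^i φ_i(S) < α. -/
open scoped BigOperators

/-!
Each `φ_i(S)` is at most the number `n^(i+1)` of all vertex sequences of length `i + 1`, so the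
series is dominated by the geometric series `Σ_i α^(i+2) n^(i+3) = α² n³ / (1 - α n)`. This is
less than `α` exactly when `α (n³ + n) < 1`.
-/

theorem tsum_le_div_one_sub_of_le_geometric {f : ℕ → ℝ} {C r : ℝ} (hf₀ : ∀ i, 0 ≤ f i)
    (hf : ∀ i, f i ≤ C * r ^ i) (hr₀ : 0 ≤ r) (hr₁ : r < 1) :
    ∑' i, f i ≤ C / (1 - r) := by
  have hgeom : Summable fun i ↦ C * r ^ i := (summable_geometric_of_lt_one hr₀ hr₁).mul_left C
  calc ∑' i, f i ≤ ∑' i, C * r ^ i :=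
        (hgeom.of_nonneg_of_le hf₀ hf).tsum_le_tsum hf hgeom
    _ = C / (1 - r) := by
        rw [tsum_mul_left, tsum_geometric_of_lt_one hr₀ hr₁, div_eq_mul_inv]

theorem SimpleGraph.phiCount_le_card_pow {V : Type*} [Fintype V] [DecidableEq V]
    (G : SimpleGraph V) [DecidableRel G.Adj] (i : ℕ) (S : Finset V) :
    G.phiCount i S ≤ Fintype.card V ^ (i + 1) := by
  calc G.phiCount i S ≤ Fintype.card (Fin (i + 1) → V) := Finset.card_filter_le _ _
    _ = Fintype.card V ^ (i + 1) := by rw [Fintype.card_fun, Fintype.card_fin]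

theorem ged_tail_from_two_lt_general {V : Type*} [Fintype V] [DecidableEq V]
    (G : SimpleGraph V) [DecidableRel G.Adj] (α : ℝ) (hα : 0 < α)
    (hα' : α < 1 / ((Fintype.card V : ℝ) ^ 3 + Fintype.card V)) (S : Finset V) :
    (∑' i : ℕ, α ^ (i + 2) * (G.phiCount (i + 2) S : ℝ)) < α := by
  have hφ (i : ℕ) : (G.phiCount i S : ℝ) ≤ (Fintype.card V : ℝ) ^ (i + 1) := by
    exact_mod_cast G.phiCount_le_card_pow i S
  set n : ℝ := (Fintype.card V : ℝ)
  have hn : 0 ≤ n := Nat.cast_nonneg _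
  have hsmall : α * (n ^ 3 + n) < 1 := by
    have hden : 0 < n ^ 3 + n := one_div_pos.mp (hα.trans hα')
    rwa [lt_div_iff₀ hden] at hα'
  have hαn : α * n < 1 := by nlinarith [mul_nonneg hα.le (pow_nonneg hn 3)]
  have hterm (i : ℕ) : α ^ (i + 2) * (G.phiCount (i + 2) S : ℝ) ≤ α ^ 2 * n ^ 3 * (α * n) ^ i :=
    calc α ^ (i + 2) * (G.phiCount (i + 2) S : ℝ) ≤ α ^ (i + 2) * n ^ (i + 3) := by
          gcongr
          exact hφ (i + 2)
      _ = α ^ 2 * n ^ 3 * (α * n) ^ i := by ring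
  calc (∑' i : ℕ, α ^ (i + 2) * (G.phiCount (i + 2) S : ℝ))
      ≤ α ^ 2 * n ^ 3 / (1 - α * n) :=
        tsum_le_div_one_sub_of_le_geometric (fun i ↦ by positivity) hterm (by positivity) hαn
    _ < α := by
        rw [div_lt_iff₀ (by linarith)]
        nlinarith

/-- If `0 < α < 1/(n³+n)` with `n = |V| ≥ 1`, then for every `S ⊆ V`,
`Σ_{i=2}^∞ α^i φ_i(S) < α`. -/
theorem ged_tail_from_two_lt {V : Type*} [Fintype V] [DecidableEq V] [Nonempty V]
    (G : SimpleGraph V) [DecidableRel G.Adj] (α : ℝ) (hα : 0 < α)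
    (hα' : α < 1 / ((Fintype.card V : ℝ) ^ 3 + Fintype.card V)) (S : Finset V) :
    (∑' i : ℕ, α ^ (i + 2) * (G.phiCount (i + 2) S : ℝ)) < α :=
  ged_tail_from_two_lt_general G α hα hα' S
end

section
/- Spectral tail bound: if α·σ_max < 1 with α > 0, then for every ℓ ≥ 1, GED_{>ℓ}(V) ≤ √|V| · α^{ℓ+1} · (σ_max / (1 − α·σ_max)) · Σ_{x∈V} ω_ℓ(x). -/
open scoped BigOperators

/-!
Every walk meets `V`, so `φ_i(V)` is the total number of walks of length `i`, which is
`1ᵀ Aⁱ 1 = Σₓ ω_i(x)`. For `i = ℓ + 1 + k`, write `A^i 1 = A^(k+1) (A^ℓ 1)`: Cauchy–Schwarz against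
`1` and the operator norm give `1ᵀ A^i 1 ≤ √|V| · σ_max^(k+1) · ‖A^ℓ 1‖₂`, and `‖A^ℓ 1‖₂ ≤ ‖A^ℓ 1‖₁ =
Σₓ ω_ℓ(x)` because `A^ℓ 1` is entrywise nonnegative. Summing the geometric series in `α σ_max`
gives the bound.
-/

open Finset Matrix

theorem EuclideanSpace.norm_toLp_le_sum_of_nonneg {ι : Type*} [Fintype ι] {w : ι → ℝ}
    (hw : 0 ≤ w) : ‖WithLp.toLp 2 w‖ ≤ ∑ x, w x := by
  rw [EuclideanSpace.norm_eq, Real.sqrt_le_left (sum_nonneg fun x _ => hw x)]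
  simpa [abs_of_nonneg (hw _)] using sum_sq_le_sq_sum_of_nonneg (s := univ) fun x _ => hw x

theorem EuclideanSpace.norm_toLp_one {ι : Type*} [Fintype ι] :
    ‖WithLp.toLp 2 (1 : ι → ℝ)‖ = √(Fintype.card ι) := by
  simp [EuclideanSpace.norm_eq]

theorem Matrix.sum_mulVec_le_of_nonneg {ι : Type*} [Fintype ι] [DecidableEq ι]
    (M : Matrix ι ι ℝ) {w : ι → ℝ} (hw : 0 ≤ w) :
    ∑ x, (M *ᵥ w) x ≤ √(Fintype.card ι) * ‖toEuclideanCLM (𝕜 := ℝ) M‖ * ∑ x, w x := by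
  calc ∑ x, (M *ᵥ w) x
      = inner ℝ (WithLp.toLp 2 1) (toEuclideanCLM (𝕜 := ℝ) M (WithLp.toLp 2 w)) := by
        rw [inner_toEuclideanCLM]; simp [dotProduct]
    _ ≤ ‖WithLp.toLp 2 (1 : ι → ℝ)‖ * (‖toEuclideanCLM (𝕜 := ℝ) M‖ * ‖WithLp.toLp 2 w‖) :=
        (real_inner_le_norm _ _).trans (by gcongr; exact (toEuclideanCLM (𝕜 := ℝ) M).le_opNorm _)
    _ ≤ √(Fintype.card ι) * ‖toEuclideanCLM (𝕜 := ℝ) M‖ * ∑ x, w x := by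
        rw [EuclideanSpace.norm_toLp_one, ← mul_assoc]
        gcongr
        exact EuclideanSpace.norm_toLp_le_sum_of_nonneg hw

theorem tsum_le_div_of_le_geometric {f : ℕ → ℝ} {C r : ℝ} (hf0 : ∀ i, 0 ≤ f i) (hr0 : 0 ≤ r)
    (hr1 : r < 1) (hf : ∀ i, f i ≤ C * r ^ i) : ∑' i, f i ≤ C / (1 - r) := by
  have hgeom := (summable_geometric_of_lt_one hr0 hr1).mul_left C
  calc ∑' i, f i ≤ ∑' i, C * r ^ i :=
        Summable.tsum_le_tsum hf (hgeom.of_nonneg_of_le hf0 hf) hgeom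
    _ = C / (1 - r) := by rw [tsum_mul_left, tsum_geometric_of_lt_one hr0 hr1, div_eq_mul_inv]

namespace SimpleGraph

variable {V : Type*} (G : SimpleGraph V)

theorem isWalkFun_cons_iff {i : ℕ} (x : V) (q : Fin (i + 1) → V) :
    G.IsWalkFun (i + 1) (Fin.cons x q) ↔ G.Adj x (q 0) ∧ G.IsWalkFun i q := by
  simp [IsWalkFun, Fin.forall_fin_succ]

variable [Fintype V] [DecidableEq V] [DecidableRel G.Adj]

def walkFunsFrom (i : ℕ) (x : V) : Finset (Fin (i + 1) → V) :=
  univ.filter fun p => G.IsWalkFun i p ∧ p 0 = x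

theorem card_walkFunsFrom_succ (i : ℕ) (x : V) :
    #(G.walkFunsFrom (i + 1) x) = ∑ u ∈ G.neighborFinset x, #(G.walkFunsFrom i u) := by
  have htail : #(G.walkFunsFrom (i + 1) x) =
      #(univ.filter fun q : Fin (i + 1) → V => G.Adj x (q 0) ∧ G.IsWalkFun i q) := by
    refine card_nbij' Fin.tail (fun q => (Fin.cons x q : Fin (i + 2) → V)) ?_ ?_ ?_ ?_
    · intro p hp
      simp only [walkFunsFrom, mem_coe, mem_filter, mem_univ, true_and] at hp ⊢
      rw [← hp.2, ← G.isWalkFun_cons_iff, Fin.cons_self_tail]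
      exact hp.1
    · intro q hq
      simp only [walkFunsFrom, mem_coe, mem_filter, mem_univ, true_and] at hq ⊢
      exact ⟨(G.isWalkFun_cons_iff x q).2 hq, Fin.cons_zero _ _⟩
    · intro p hp
      simp only [walkFunsFrom, mem_coe, mem_filter, mem_univ, true_and] at hp
      rw [← hp.2]
      exact Fin.cons_self_tail p
    · intro q _
      exact Fin.tail_cons _ _
  rw [htail, card_eq_sum_card_fiberwise (f := fun q => q 0) (t := G.neighborFinset x)
    (fun q hq => by simpa using (mem_filter.1 hq).2.1)]
  refine sum_congr rfl fun u hu => ?_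
  rw [mem_neighborFinset] at hu
  simp only [walkFunsFrom, filter_filter]
  congr 1
  exact filter_congr fun q _ => ⟨fun h => ⟨h.1.2, h.2⟩, fun h => ⟨⟨h.2 ▸ hu, h.1⟩, h.2⟩⟩

theorem omegaCount_succ (i : ℕ) (x : V) :
    G.omegaCount (i + 1) x = ∑ u ∈ G.neighborFinset x, G.omegaCount i u := by
  simp only [omegaCount, pow_succ', adjMatrix_mul_apply]
  exact sum_comm

theorem card_walkFunsFrom_eq_omegaCount (i : ℕ) (x : V) :
    (#(G.walkFunsFrom i x) : ℝ) = G.omegaCount i x := by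
  induction i generalizing x with
  | zero =>
    have : G.walkFunsFrom 0 x = {fun _ => x} := by
      ext p
      simp [walkFunsFrom, IsWalkFun, funext_iff, Fin.forall_fin_one]
    simp [this, omegaCount, Matrix.one_apply]
  | succ i ih =>
    rw [card_walkFunsFrom_succ, omegaCount_succ, Nat.cast_sum]
    exact sum_congr rfl fun u _ => ih u

theorem omegaCount_nonneg (i : ℕ) (x : V) : 0 ≤ G.omegaCount i x :=
  G.card_walkFunsFrom_eq_omegaCount i x ▸ Nat.cast_nonneg _

theorem phiCount_univ (i : ℕ) : G.phiCount i univ = G.walkCount i := by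
  simp [phiCount, walkCount]

theorem walkCount_eq_sum_omegaCount (i : ℕ) : (G.walkCount i : ℝ) = ∑ x, G.omegaCount i x := by
  rw [walkCount, card_eq_sum_card_fiberwise (f := fun p => p 0) (t := univ)
    (fun _ _ => mem_univ _), Nat.cast_sum]
  simp only [filter_filter, ← card_walkFunsFrom_eq_omegaCount]
  rfl

theorem omegaCount_eq_mulVec (i : ℕ) : G.omegaCount i = G.adjMatrix ℝ ^ i *ᵥ 1 := by
  ext x
  simp [omegaCount, Matrix.mulVec, dotProduct]

theorem sum_omegaCount_add_le {n : ℕ} (hn : 0 < n) (m : ℕ) :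
    ∑ x, G.omegaCount (n + m) x ≤ √(Fintype.card V) * G.sigmaMax ^ n * ∑ x, G.omegaCount m x := by
  have hw : 0 ≤ G.adjMatrix ℝ ^ m *ᵥ 1 := G.omegaCount_eq_mulVec m ▸ G.omegaCount_nonneg m
  calc ∑ x, G.omegaCount (n + m) x
      = ∑ x, (G.adjMatrix ℝ ^ n *ᵥ (G.adjMatrix ℝ ^ m *ᵥ 1)) x := by
        rw [omegaCount_eq_mulVec, pow_add, Matrix.mulVec_mulVec]
    _ ≤ √(Fintype.card V) * ‖Matrix.toEuclideanCLM (𝕜 := ℝ) (G.adjMatrix ℝ ^ n)‖ *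
          ∑ x, G.omegaCount m x := by
        rw [omegaCount_eq_mulVec]
        exact Matrix.sum_mulVec_le_of_nonneg _ hw
    _ ≤ √(Fintype.card V) * G.sigmaMax ^ n * ∑ x, G.omegaCount m x := by
        rw [map_pow]
        gcongr
        · exact sum_nonneg fun x _ => G.omegaCount_nonneg m x
        · exact norm_pow_le' _ hn

end SimpleGraph

theorem ged_tail_spectral_bound_general {V : Type*} [Fintype V] [DecidableEq V]
    (G : SimpleGraph V) [DecidableRel G.Adj] (α : ℝ) (hα : 0 < α)
    (h : α * G.sigmaMax < 1) (ℓ : ℕ) :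
    G.GEDtail α ℓ Finset.univ ≤
      Real.sqrt (Fintype.card V) * α ^ (ℓ + 1) * (G.sigmaMax / (1 - α * G.sigmaMax)) *
        ∑ x : V, G.omegaCount ℓ x := by
  set σ := G.sigmaMax
  set W := ∑ x : V, G.omegaCount ℓ x
  have hσ : 0 ≤ σ := norm_nonneg _
  have hterm : ∀ i : ℕ, α ^ (ℓ + 1 + i) * (G.phiCount (ℓ + 1 + i) univ : ℝ)
      ≤ (√(Fintype.card V) * α ^ (ℓ + 1) * σ * W) * (α * σ) ^ i := by
    intro i
    have hwalks := G.sum_omegaCount_add_le (n := i + 1) i.succ_pos ℓ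
    rw [G.phiCount_univ, G.walkCount_eq_sum_omegaCount, show ℓ + 1 + i = i + 1 + ℓ by omega]
    calc α ^ (i + 1 + ℓ) * ∑ x, G.omegaCount (i + 1 + ℓ) x
        ≤ α ^ (i + 1 + ℓ) * (√(Fintype.card V) * σ ^ (i + 1) * W) := by gcongr
      _ = (√(Fintype.card V) * α ^ (ℓ + 1) * σ * W) * (α * σ) ^ i := by ring
  calc G.GEDtail α ℓ univ ≤ (√(Fintype.card V) * α ^ (ℓ + 1) * σ * W) / (1 - α * σ) :=
        tsum_le_div_of_le_geometric (fun i => by positivity) (by positivity) h hterm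
    _ = √(Fintype.card V) * α ^ (ℓ + 1) * (σ / (1 - α * σ)) * W := by ring

/-- spectral tail bound via the largest singular value. -/
theorem ged_tail_spectral_bound {V : Type*} [Fintype V] [DecidableEq V] [Nonempty V]
    (G : SimpleGraph V) [DecidableRel G.Adj] (α : ℝ) (hα : 0 < α)
    (h : α * G.sigmaMax < 1) (ℓ : ℕ) (hℓ : 1 ≤ ℓ) :
    G.GEDtail α ℓ Finset.univ ≤
      Real.sqrt (Fintype.card V) * α ^ (ℓ + 1) * (G.sigmaMax / (1 - α * G.sigmaMax)) *
        ∑ x : V, G.omegaCount ℓ x :=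
  ged_tail_spectral_bound_general G α hα h ℓ
end

section
/- For every i ≥ 1, every S ⊆ V, and every x ∈ V, the marginal walk count satisfies φ_i(S ∪ {x}) − φ_i(S) ≤ Σ_{j=0}^{i} m_{i−j}(x, S) · s_j(x, S), where m_t(x, S) is the number of walks of length t ending at x that contain no vertex of S, and s_j(x, S) is the number of walks of length j starting at x that contain no vertex of S. -/
open scoped BigOperators

/-!
A walk counted by `φ_i(S ∪ {x})` but not by `φ_i(S)` avoids `S` and visits `x`. If it visits `x`
at step `i - j`, cutting it there gives a walk of length `i - j` ending at `x` and a walk of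
length `j` starting at `x`, both avoiding `S`; for a fixed cut position this is injective, and
summing over the possible positions gives the bound.
-/

open Finset

namespace SimpleGraph

variable {V : Type*} {G : SimpleGraph V}

lemma IsWalkFun.take {k l : ℕ} {p : Fin (k + l + 1) → V} (hp : G.IsWalkFun (k + l) p) :
    G.IsWalkFun k fun a : Fin (k + 1) => p ⟨a, by omega⟩ :=
  fun j => hp ⟨j, by omega⟩

lemma IsWalkFun.drop {k l : ℕ} {p : Fin (k + l + 1) → V} (hp : G.IsWalkFun (k + l) p) :
    G.IsWalkFun l fun a : Fin (l + 1) => p ⟨k + a, by omega⟩ :=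
  fun j => hp ⟨k + j, by omega⟩

variable [Fintype V] [DecidableEq V] (G) [DecidableRel G.Adj]

lemma phiCount_insert_s17 (i : ℕ) (S : Finset V) (x : V) :
    G.phiCount i (insert x S) = G.phiCount i S +
      #{p : Fin (i + 1) → V | G.IsWalkFun i p ∧ (∃ j, p j = x) ∧ ∀ j, p j ∉ S} := by
  rw [phiCount, phiCount, ← card_union_of_disjoint]
  · congr 1
    ext p
    simp only [mem_filter, mem_univ, true_and, mem_union, mem_insert]
    grind
  · rw [disjoint_filter]
    rintro p - ⟨-, j, hj⟩ ⟨-, -, hS⟩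
    exact hS j hj

lemma card_walks_avoiding_visit_le {i k : ℕ} (hk : k ≤ i) (S : Finset V) (x : V) :
    #{p : Fin (i + 1) → V | G.IsWalkFun i p ∧ p ⟨k, by omega⟩ = x ∧ ∀ j, p j ∉ S} ≤
      G.missCount k x S * G.startMissCount (i - k) x S := by
  obtain ⟨l, rfl⟩ := Nat.exists_eq_add_of_le hk
  rw [Nat.add_sub_cancel_left, missCount, startMissCount, ← card_product]
  refine card_le_card_of_injOn
    (fun p => (fun a : Fin (k + 1) => p ⟨a, by omega⟩,
      fun a : Fin (l + 1) => p ⟨k + a, by omega⟩)) ?_ ?_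
  · intro p hp
    simp only [coe_filter, Set.mem_ofPred_eq, mem_univ, true_and] at hp
    obtain ⟨hw, hx, hS⟩ := hp
    simp only [coe_product, coe_filter, Set.mem_prod, Set.mem_ofPred_eq, mem_univ, true_and]
    exact ⟨⟨hw.take, hx, fun _ => hS _⟩, hw.drop, hx, fun _ => hS _⟩
  · intro p _ q _ h
    simp only [Prod.mk.injEq, funext_iff] at h
    funext m
    rcases le_or_gt (m : ℕ) k with hm | hm
    · exact h.1 ⟨m, by omega⟩
    · simpa [Nat.add_sub_cancel' hm.le] using h.2 ⟨m - k, by omega⟩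

lemma card_walks_avoiding_through_le (i : ℕ) (S : Finset V) (x : V) :
    #{p : Fin (i + 1) → V | G.IsWalkFun i p ∧ (∃ j, p j = x) ∧ ∀ j, p j ∉ S} ≤
      ∑ j ∈ range (i + 1), G.missCount (i - j) x S * G.startMissCount j x S := by
  have hcover :
      ({p : Fin (i + 1) → V | G.IsWalkFun i p ∧ (∃ j, p j = x) ∧ ∀ j, p j ∉ S} : Finset _) ⊆
        univ.biUnion fun k : Fin (i + 1) =>
          {p | G.IsWalkFun i p ∧ p k = x ∧ ∀ j, p j ∉ S} := by
    intro p hp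
    simp only [mem_filter, mem_univ, true_and, mem_biUnion] at hp ⊢
    obtain ⟨hw, ⟨j, hj⟩, hS⟩ := hp
    exact ⟨j, hw, hj, hS⟩
  calc _ ≤ _ := card_le_card hcover
    _ ≤ _ := card_biUnion_le
    _ ≤ ∑ k : Fin (i + 1), G.missCount k x S * G.startMissCount (i - k) x S :=
      sum_le_sum fun k _ => G.card_walks_avoiding_visit_le k.is_le S x
    _ = _ := by
      rw [Fin.sum_univ_eq_sum_range (fun k => G.missCount k x S * G.startMissCount (i - k) x S),
        ← sum_range_reflect]
      refine sum_congr rfl fun k hk => ?_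
      rw [Nat.add_sub_cancel, Nat.sub_sub_self (Nat.lt_succ_iff.mp (mem_range.mp hk))]

end SimpleGraph

theorem phi_marginal_le_sum_miss_mul_start_general {V : Type*} [Fintype V] [DecidableEq V]
    (G : SimpleGraph V) [DecidableRel G.Adj] (i : ℕ)
    (S : Finset V) (x : V) :
    (G.phiCount i (insert x S) : ℤ) - (G.phiCount i S : ℤ) ≤
      ∑ j ∈ Finset.range (i + 1),
        ((G.missCount (i - j) x S : ℤ) * (G.startMissCount j x S : ℤ)) := by
  rw [G.phiCount_insert_s17, Nat.cast_add, add_sub_cancel_left]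
  exact_mod_cast G.card_walks_avoiding_through_le i S x

/-- `φ_i(S ∪ {x}) − φ_i(S) ≤ Σ_{j=0}^i m_{i−j}(x,S) · s_j(x,S)`. -/
theorem phi_marginal_le_sum_miss_mul_start {V : Type*} [Fintype V] [DecidableEq V]
    (G : SimpleGraph V) [DecidableRel G.Adj] (i : ℕ) (hi : 1 ≤ i)
    (S : Finset V) (x : V) :
    (G.phiCount i (insert x S) : ℤ) - (G.phiCount i S : ℤ) ≤
      ∑ j ∈ Finset.range (i + 1),
        ((G.missCount (i - j) x S : ℤ) * (G.startMissCount j x S : ℤ)) :=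
  phi_marginal_le_sum_miss_mul_start_general G i S x
end

section
/- Greedy with additive error for submodular maximization: let X be a nonempty finite set, f a real-valued, non-decreasing, submodular set function on subsets of X with f(∅) = 0, k ≥ 1 an integer, and ε > 0. Suppose S_0 = ∅ and for each i = 1, …, k, S_i = S_{i−1} ∪ {x_i} where x_i ∈ X satisfies f(S_{i−1} ∪ {x_i}) − f(S_{i−1}) ≥ f(S_{i−1} ∪ {y}) − f(S_{i−1}) − ε/k for every y ∈ X. Then f(S_k) ≥ (1 − 1/e) · f(S*) − ε, where S* is any subset of X with |S*| ≤ k maximizing f among all such subsets. -/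
/-!
Write `a i = f S* - f (S i)` for the gap to the comparison set. By submodularity, adding the
at most `k` elements of `S*` to `S i` one at a time gains at most `k` times the best single
marginal gain, which the greedy choice attains up to `ε / k`; hence
`a (i + 1) ≤ (1 - 1/k) a i + ε / k`. Iterating `k` times from `a 0 = f S*` gives
`a k ≤ (1 - 1/k)^k f S* + ε ≤ f S* / e + ε`.
-/

namespace Finset

variable {X : Type*} [DecidableEq X]

def Submodular (f : Finset X → ℝ) : Prop :=
  ∀ S T : Finset X, S ⊆ T → ∀ x ∉ T, f (insert x S) - f S ≥ f (insert x T) - f T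

variable {f : Finset X → ℝ}

theorem Submodular.union_le_add_sum_sub (hsub : Submodular f) (B D : Finset X) :
    f (B ∪ D) ≤ f B + ∑ y ∈ D, (f (insert y B) - f B) := by
  induction D using Finset.induction_on with
  | empty => simp
  | @insert a D haD ih =>
    rw [sum_insert haD, union_insert]
    by_cases ha : a ∈ B ∪ D
    · have haB : a ∈ B := by simpa [haD] using ha
      rw [insert_eq_of_mem ha, insert_eq_of_mem haB]
      linarith
    · linarith [hsub B (B ∪ D) subset_union_left a ha]

theorem Submodular.le_add_card_mul_of_sub_le (hmono : Monotone f) (hsub : Submodular f)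
    {B T : Finset X} {c : ℝ} (hc : ∀ y ∈ T, f (insert y B) - f B ≤ c) :
    f T ≤ f B + T.card * c :=
  calc f T ≤ f (B ∪ T) := hmono subset_union_right
    _ ≤ f B + ∑ y ∈ T, (f (insert y B) - f B) := hsub.union_le_add_sum_sub B T
    _ ≤ f B + T.card * c := by
      grw [sum_le_sum hc, sum_const, nsmul_eq_mul]

theorem Submodular.sub_insert_le_of_greedy (hmono : Monotone f) (hsub : Submodular f)
    {B T : Finset X} {x : X} {k : ℕ} (hk : 0 < k) (hT : T.card ≤ k) {δ : ℝ} (hδ : 0 ≤ δ)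
    (hgreedy : ∀ y, f (insert y B) - f B - δ ≤ f (insert x B) - f B) :
    f T - f (insert x B) ≤ (1 - 1 / k) * (f T - f B) + δ := by
  set gain := f (insert x B) - f B
  have hgain : 0 ≤ gain := sub_nonneg.mpr (hmono (subset_insert x B))
  have hk' : (0 : ℝ) < k := by exact_mod_cast hk
  have hbound : f T ≤ f B + k * (gain + δ) :=
    calc f T ≤ f B + T.card * (gain + δ) :=
          hsub.le_add_card_mul_of_sub_le hmono fun y _ => by linarith [hgreedy y]
      _ ≤ f B + k * (gain + δ) := by gcongr
  have hshrink : (f T - f B) / k ≤ gain + δ := by rw [div_le_iff₀ hk']; linarith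
  have hsplit : (1 - 1 / k) * (f T - f B) = (f T - f B) - (f T - f B) / k := by ring
  linarith

end Finset

theorem le_pow_mul_add_of_le_mul_add {a : ℕ → ℝ} {q d : ℝ} (hq0 : 0 ≤ q) (hq1 : q ≤ 1)
    (hd : 0 ≤ d) {n : ℕ} (h : ∀ i < n, a (i + 1) ≤ q * a i + d) :
    a n ≤ q ^ n * a 0 + n * d := by
  induction n with
  | zero => simp
  | succ n ih =>
    have ih' := ih fun i hi => h i (by omega)
    have hnd : q * (n * d) ≤ n * d := mul_le_of_le_one_left (by positivity) hq1
    calc a (n + 1) ≤ q * a n + d := h n (by omega)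
      _ ≤ q * (q ^ n * a 0 + n * d) + d := by gcongr
      _ = q ^ (n + 1) * a 0 + q * (n * d) + d := by ring
      _ ≤ q ^ (n + 1) * a 0 + (n + 1 : ℕ) * d := by push_cast; linarith

theorem greedy_additive_error_general {X : Type*} [DecidableEq X]
    (f : Finset X → ℝ) (hf0 : f ∅ = 0)
    (hmono : ∀ S T : Finset X, S ⊆ T → f S ≤ f T)
    (hsub : ∀ S T : Finset X, S ⊆ T → ∀ x ∉ T,
      f (insert x S) - f S ≥ f (insert x T) - f T)
    (k : ℕ) (hk : 1 ≤ k) (ε : ℝ) (hε : 0 < ε)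
    (S : ℕ → Finset X) (x : ℕ → X) (hS0 : S 0 = ∅)
    (hstep : ∀ i : ℕ, 1 ≤ i → i ≤ k →
      S i = insert (x i) (S (i - 1)) ∧
        ∀ y : X, f (insert (x i) (S (i - 1))) - f (S (i - 1)) ≥
          f (insert y (S (i - 1))) - f (S (i - 1)) - ε / k)
    (Sstar : Finset X) (hcard : Sstar.card ≤ k) :
    f (S k) ≥ (1 - 1 / Real.exp 1) * f Sstar - ε := by
  have hmono' : Monotone f := fun S T => hmono S T
  have hk' : (1 : ℝ) ≤ k := by exact_mod_cast hk
  have hδ : 0 ≤ ε / k := by positivity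
  have hgap : f Sstar - f (S k) ≤ (1 - 1 / k) ^ k * (f Sstar - f (S 0)) + k * (ε / k) := by
    refine le_pow_mul_add_of_le_mul_add (a := fun i => f Sstar - f (S i)) ?_ ?_ hδ fun i hi => ?_
    · exact sub_nonneg.mpr (div_le_one_of_le₀ hk' (by positivity))
    · exact sub_le_self _ (by positivity)
    obtain ⟨hSi, hgreedy⟩ := hstep (i + 1) (by omega) hi
    simp only [Nat.add_sub_cancel] at hSi hgreedy
    rw [hSi]
    exact Finset.Submodular.sub_insert_le_of_greedy hmono' hsub (by omega) hcard hδ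
      fun y => (hgreedy y).le
  have hpow : (1 - 1 / k : ℝ) ^ k ≤ 1 / Real.exp 1 := by
    simpa [Real.exp_neg] using Real.one_sub_div_pow_le_exp_neg hk'
  have hfstar : 0 ≤ f Sstar := hf0 ▸ hmono' (Finset.empty_subset Sstar)
  rw [hS0, hf0, sub_zero, mul_div_cancel₀ ε (by positivity)] at hgap
  nlinarith [mul_le_mul_of_nonneg_right hpow hfstar]

/-- greedy with additive error for non-decreasing submodular maximization
achieves a `(1 − 1/e)`-approximation up to additive error `ε`. -/
theorem greedy_additive_error {X : Type*} [Fintype X] [DecidableEq X] [Nonempty X]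
    (f : Finset X → ℝ) (hf0 : f ∅ = 0)
    (hmono : ∀ S T : Finset X, S ⊆ T → f S ≤ f T)
    (hsub : ∀ S T : Finset X, S ⊆ T → ∀ x ∉ T,
      f (insert x S) - f S ≥ f (insert x T) - f T)
    (k : ℕ) (hk : 1 ≤ k) (ε : ℝ) (hε : 0 < ε)
    (S : ℕ → Finset X) (x : ℕ → X) (hS0 : S 0 = ∅)
    (hstep : ∀ i : ℕ, 1 ≤ i → i ≤ k →
      S i = insert (x i) (S (i - 1)) ∧
        ∀ y : X, f (insert (x i) (S (i - 1))) - f (S (i - 1)) ≥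
          f (insert y (S (i - 1))) - f (S (i - 1)) - ε / k)
    (Sstar : Finset X) (hcard : Sstar.card ≤ k)
    (hopt : ∀ T : Finset X, T.card ≤ k → f T ≤ f Sstar) :
    f (S k) ≥ (1 - 1 / Real.exp 1) * f Sstar - ε :=
  greedy_additive_error_general f hf0 hmono hsub k hk ε hε S x hS0 hstep Sstar hcard
end

section
/- Intermediate bound for greedy with additive error: let X be a nonempty finite set, f a real-valued, non-decreasing, submodular set function on subsets of X with f(∅) = 0, k ≥ 1 an integer, and ε > 0. Suppose S_0 = ∅ and for each i, S_i = S_{i−1} ∪ {x_i} where x_i ∈ X satisfies f(S_{i−1} ∪ {x_i}) − f(S_{i−1}) ≥ f(S_{i−1} ∪ {y}) − f(S_{i−1}) − ε/k for every y ∈ X. Then for every j with 0 ≤ j ≤ k, f(S_j) ≥ ((k^j − (k−1)^j)/k^j) · f(S*) − j·ε/k, where S* is any subset of X with |S*| ≤ k maximizing f among all such subsets. -/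
/-! Submodularity and monotonicity bound `f S*` by `f S_j` plus `k` times the largest marginal
gain at `S_j`, which the greedy choice attains up to `ε / k`. Hence the gap `f S* - f S_j`
shrinks by the factor `(k - 1) / k` per step, up to an additive `ε / k`, and unrolling this
recurrence from the gap `f S*` at `S_0 = ∅` gives the bound. -/

open Finset

namespace Finset

variable {X : Type*} [DecidableEq X]

def IsSubmodular (f : Finset X → ℝ) : Prop :=
  ∀ S T : Finset X, S ⊆ T → ∀ x ∉ T, f (insert x T) - f T ≤ f (insert x S) - f S

theorem le_add_sum_marginal_of_isSubmodular {f : Finset X → ℝ} (hmono : Monotone f)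
    (hsub : IsSubmodular f) (A B : Finset X) :
    f (A ∪ B) ≤ f A + ∑ y ∈ B, (f (insert y A) - f A) := by
  induction B using Finset.induction_on with
  | empty => simp
  | @insert b B hb ih =>
    rw [union_insert, sum_insert hb]
    by_cases hbAB : b ∈ A ∪ B
    · have hgain : f A ≤ f (insert b A) := hmono (subset_insert b A)
      rw [insert_eq_of_mem hbAB]
      linarith
    · have := hsub A (A ∪ B) subset_union_left b hbAB
      linarith

theorem le_add_card_mul_of_marginal_le {f : Finset X → ℝ} (hmono : Monotone f)
    (hsub : IsSubmodular f) {A T : Finset X} {g : ℝ}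
    (hg : ∀ y ∈ T, f (insert y A) - f A ≤ g) :
    f T ≤ f A + #T * g :=
  calc f T ≤ f (A ∪ T) := hmono subset_union_right
    _ ≤ f A + ∑ y ∈ T, (f (insert y A) - f A) :=
      le_add_sum_marginal_of_isSubmodular hmono hsub A T
    _ ≤ f A + ∑ _y ∈ T, g := by gcongr with y hy; exact hg y hy
    _ = f A + #T * g := by rw [sum_const, nsmul_eq_mul]

theorem sub_le_of_greedy_step {f : Finset X → ℝ} (hmono : Monotone f) (hsub : IsSubmodular f)
    {k : ℕ} (hk : 0 < k) {ε : ℝ} (hε : 0 ≤ ε) {A T : Finset X} (hT : #T ≤ k) {x : X}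
    (hgreedy : ∀ y, f (insert y A) - f A - ε / k ≤ f (insert x A) - f A) :
    f T - f (insert x A) ≤ ((k - 1) / k) * (f T - f A) + ε / k := by
  have hkpos : (0 : ℝ) < k := by exact_mod_cast hk
  have hg_nonneg : 0 ≤ f (insert x A) - f A + ε / k := by
    have : f A ≤ f (insert x A) := hmono (subset_insert x A)
    have : 0 ≤ ε / k := by positivity
    linarith
  have hcover : f T - f A ≤ k * (f (insert x A) - f A) + ε :=
    calc f T - f A ≤ #T * (f (insert x A) - f A + ε / k) :=
          sub_le_iff_le_add'.2 <| le_add_card_mul_of_marginal_le hmono hsub fun y _ =>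
            sub_le_iff_le_add.1 (hgreedy y)
      _ ≤ k * (f (insert x A) - f A + ε / k) := by gcongr
      _ = k * (f (insert x A) - f A) + ε := by field_simp
  rw [div_mul_eq_mul_div, ← add_div, le_div_iff₀ hkpos]
  linear_combination hcover

end Finset

theorem le_pow_mul_add_of_le_mul_add_s19 {u : ℕ → ℝ} {c δ : ℝ} (hc₀ : 0 ≤ c) (hc₁ : c ≤ 1)
    (hδ : 0 ≤ δ) {n : ℕ} (hu : ∀ j < n, u (j + 1) ≤ c * u j + δ) :
    ∀ j ≤ n, u j ≤ c ^ j * u 0 + j * δ := by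
  intro j hj
  induction j with
  | zero => simp
  | succ j ih =>
    have hstep := hu j (by omega)
    have hcj : c * (j * δ) ≤ j * δ := mul_le_of_le_one_left (by positivity) hc₁
    calc u (j + 1) ≤ c * u j + δ := hstep
      _ ≤ c * (c ^ j * u 0 + j * δ) + δ := by gcongr; exact ih (by omega)
      _ ≤ c ^ (j + 1) * u 0 + (j + 1 : ℕ) * δ := by push_cast; rw [pow_succ]; linarith

theorem greedy_additive_error_intermediate_general {X : Type*} [DecidableEq X]
    (f : Finset X → ℝ) (hf0 : f ∅ = 0)
    (hmono : ∀ S T : Finset X, S ⊆ T → f S ≤ f T)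
    (hsub : ∀ S T : Finset X, S ⊆ T → ∀ x ∉ T,
      f (insert x S) - f S ≥ f (insert x T) - f T)
    (k : ℕ) (hk : 1 ≤ k) (ε : ℝ) (hε : 0 < ε)
    (S : ℕ → Finset X) (x : ℕ → X) (hS0 : S 0 = ∅)
    (hstep : ∀ i : ℕ, 1 ≤ i → i ≤ k →
      S i = insert (x i) (S (i - 1)) ∧
        ∀ y : X, f (insert (x i) (S (i - 1))) - f (S (i - 1)) ≥
          f (insert y (S (i - 1))) - f (S (i - 1)) - ε / k)
    (Sstar : Finset X) (hcard : Sstar.card ≤ k) :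
    ∀ j : ℕ, j ≤ k →
      f (S j) ≥ (((k : ℝ) ^ j - ((k : ℝ) - 1) ^ j) / (k : ℝ) ^ j) * f Sstar - j * ε / k := by
  have hk1 : (1 : ℝ) ≤ k := by exact_mod_cast hk
  have hgap : ∀ j < k,
      f Sstar - f (S (j + 1)) ≤ ((k - 1) / k) * (f Sstar - f (S j)) + ε / k := by
    intro j hj
    obtain ⟨hSj, hgreedy⟩ := hstep (j + 1) (by omega) hj
    rw [hSj]
    exact sub_le_of_greedy_step (fun _ _ h => hmono _ _ h) hsub
      hk hε.le hcard fun y => by simpa using hgreedy y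
  intro j hj
  have hbound := le_pow_mul_add_of_le_mul_add_s19 (u := fun j => f Sstar - f (S j))
    (div_nonneg (sub_nonneg.2 hk1) (by positivity))
    (div_le_one_of_le₀ (by linarith) (by positivity))
    (by positivity) hgap j hj
  have hcoeff : ((k : ℝ) ^ j - ((k : ℝ) - 1) ^ j) / (k : ℝ) ^ j = 1 - ((k - 1) / k) ^ j := by
    rw [div_pow, sub_div, div_self (by positivity)]
  simp only [hS0, hf0] at hbound
  rw [hcoeff, mul_div_assoc]
  linarith

/-- intermediate bound for greedy with additive error:
`f(S_j) ≥ ((k^j − (k−1)^j)/k^j) · f(S*) − j·ε/k` for every `0 ≤ j ≤ k`. -/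
theorem greedy_additive_error_intermediate {X : Type*} [Fintype X] [DecidableEq X] [Nonempty X]
    (f : Finset X → ℝ) (hf0 : f ∅ = 0)
    (hmono : ∀ S T : Finset X, S ⊆ T → f S ≤ f T)
    (hsub : ∀ S T : Finset X, S ⊆ T → ∀ x ∉ T,
      f (insert x S) - f S ≥ f (insert x T) - f T)
    (k : ℕ) (hk : 1 ≤ k) (ε : ℝ) (hε : 0 < ε)
    (S : ℕ → Finset X) (x : ℕ → X) (hS0 : S 0 = ∅)
    (hstep : ∀ i : ℕ, 1 ≤ i → i ≤ k →
      S i = insert (x i) (S (i - 1)) ∧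
        ∀ y : X, f (insert (x i) (S (i - 1))) - f (S (i - 1)) ≥
          f (insert y (S (i - 1))) - f (S (i - 1)) - ε / k)
    (Sstar : Finset X) (hcard : Sstar.card ≤ k)
    (hopt : ∀ T : Finset X, T.card ≤ k → f T ≤ f Sstar) :
    ∀ j : ℕ, j ≤ k →
      f (S j) ≥ (((k : ℝ) ^ j - ((k : ℝ) - 1) ^ j) / (k : ℝ) ^ j) * f Sstar - j * ε / k :=
  greedy_additive_error_intermediate_general f hf0 hmono hsub k hk ε hε S x hS0 hstep Sstar hcard
end
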